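/- arXiv:2301.11698 — 3 statements merged into one kernel-verified Lean document; each statement's English description precedes it below -/
import Mathlib

section
/- Let τ = (1-√5)/2 and uₙ the Fibonacci numbers. If p̃(z) = (1+τ²z²)/(1-τz-τ²z²) = 1 + Σₙ≥1 p̃ₙ zⁿ near 0, then p̃₁ = (u₀+u₂)τ, p̃₂ = (u₁+u₃)τ², and p̃ₙ = (uₙ₋₃+uₙ₋₂+uₙ₋₁+uₙ)τⁿ for n ≥ 3. -/
open FormalMultilinearSeries NNReal ENNReal

theorem ptilde_coeffs_fib (τ : ℂ) (hτ : τ = ((1 - Real.sqrt 5) / 2 : ℝ))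
    (P : FormalMultilinearSeries ℂ ℂ ℂ)
    (hP : HasFPowerSeriesAt
      (fun z => (1 + τ ^ 2 * z ^ 2) / (1 - τ * z - τ ^ 2 * z ^ 2)) P 0) :
    P.coeff 1 = ((Nat.fib 0 + Nat.fib 2 : ℕ) : ℂ) * τ ∧
    P.coeff 2 = ((Nat.fib 1 + Nat.fib 3 : ℕ) : ℂ) * τ ^ 2 ∧
    ∀ n : ℕ, 3 ≤ n →
      P.coeff n =
        ((Nat.fib (n - 3) + Nat.fib (n - 2) + Nat.fib (n - 1) + Nat.fib n : ℕ) : ℂ)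
          * τ ^ n := by
  have h5 : Real.sqrt 5 ^ 2 = 5 := Real.sq_sqrt (by norm_num)
  have hτ2 : τ ^ 2 = τ + 1 := by
    have h : ((1 - Real.sqrt 5) / 2 : ℝ) ^ 2 = (1 - Real.sqrt 5) / 2 + 1 := by nlinarith [h5]
    rw [hτ]
    exact_mod_cast congrArg (fun x : ℝ => (x : ℂ)) h
  have hτnorm : ‖τ‖ < 1 := by
    rw [hτ, Complex.norm_real, Real.norm_eq_abs, abs_lt]
    constructor <;> nlinarith [h5, Real.sqrt_nonneg 5]
  -- the coefficients
  set c : ℕ → ℂ := fun n => if n = 0 then 1 else (-1) ^ n + τ ^ (2 * n) with hc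
  have hcnorm : ∀ n, ‖c n‖ ≤ 2 := by
    intro n
    rcases Nat.eq_zero_or_pos n with h | h
    · simp [hc, h]
    · have : ‖τ ^ (2 * n)‖ ≤ 1 :=
        (norm_pow τ (2*n)).le.trans (pow_le_one₀ (norm_nonneg τ) hτnorm.le)
      calc ‖c n‖ ≤ ‖((-1 : ℂ)) ^ n‖ + ‖τ ^ (2 * n)‖ := by
            simp only [hc, if_neg h.ne']; exact norm_add_le _ _
        _ ≤ 1 + 1 := add_le_add (by rw [norm_pow, norm_neg, norm_one, one_pow]) this
        _ = 2 := by norm_num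
  have hQ : HasFPowerSeriesOnBall
      (fun z => (1 + τ ^ 2 * z ^ 2) / (1 - τ * z - τ ^ 2 * z ^ 2))
      (ofScalars ℂ c) 0 (1/2) := by
    refine ⟨?_, by norm_num, ?_⟩
    · have := FormalMultilinearSeries.le_radius_of_bound (ofScalars ℂ c) 2
        (r := (1/2 : ℝ≥0)) (fun n => by
          have h1 : ‖ofScalars ℂ c n‖ = ‖c n‖ := ofScalars_norm ℂ c n
          have h2 : ((1/2 : ℝ≥0) : ℝ) ^ n ≤ 1 := by
            apply pow_le_one₀ <;> norm_num
          calc ‖ofScalars ℂ c n‖ * ((1/2 : ℝ≥0) : ℝ) ^ n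
              ≤ 2 * 1 := by
                apply mul_le_mul (h1 ▸ hcnorm n) h2 (by positivity) (by norm_num)
            _ = 2 := by norm_num)
      convert this using 1
      norm_num
    · intro y hy
      rw [EMetric.mem_ball, edist_zero_right] at hy
      have hy1 : ‖y‖ < 1 := by
        have h1 : (‖y‖₊ : ℝ≥0∞) < 1 := hy.trans_le (by norm_num)
        have h2 : ‖y‖₊ < 1 := by exact_mod_cast h1
        exact_mod_cast h2
      have hA : HasSum (fun n => (-y) ^ n) (1 - -y)⁻¹ :=
        hasSum_geometric_of_norm_lt_one (by simpa using hy1)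
      have hτy : ‖τ ^ 2 * y‖ < 1 := by
        rw [norm_mul, norm_pow]
        calc ‖τ‖ ^ 2 * ‖y‖ ≤ 1 * ‖y‖ := by
              apply mul_le_mul_of_nonneg_right _ (norm_nonneg y)
              exact pow_le_one₀ (norm_nonneg τ) hτnorm.le
          _ < 1 := by simpa using hy1
      have hB : HasSum (fun n => (τ ^ 2 * y) ^ n) (1 - τ ^ 2 * y)⁻¹ :=
        hasSum_geometric_of_norm_lt_one hτy
      have hC : HasSum (fun n => if n = 0 then (1 : ℂ) else 0) 1 := hasSum_ite_eq 0 1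
      have htot := (hA.add hB).sub hC
      have h1y : (1 : ℂ) + y ≠ 0 := by
        intro h
        have : y = -1 := by linear_combination h
        rw [this] at hy1; simp at hy1
      have h2y : (1 : ℂ) - τ ^ 2 * y ≠ 0 := by
        intro h
        have he : τ ^ 2 * y = 1 := by linear_combination -h
        rw [he] at hτy
        simp at hτy
      have hden : 1 - τ * y - τ ^ 2 * y ^ 2 = (1 + y) * (1 - τ ^ 2 * y) := by
        linear_combination y * hτ2
      convert htot using 1
      · funext n
        rw [ofScalars_apply_eq]
        rcases Nat.eq_zero_or_pos n with h | h
        · simp [hc, h]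
        · simp only [hc, if_neg h.ne', smul_eq_mul]
          rw [pow_mul]
          ring
      · show (1 + τ ^ 2 * (0 + y) ^ 2) / (1 - τ * (0 + y) - τ ^ 2 * (0 + y) ^ 2) = _
        rw [zero_add, hden]
        have : (1 : ℂ) - -y = 1 + y := by ring
        rw [this]
        field_simp
        ring
  have hPQ : P = ofScalars ℂ c := hP.eq_formalMultilinearSeries hQ.hasFPowerSeriesAt
  have hcoeff : ∀ n, P.coeff n = c n := by
    intro n
    rw [hPQ]
    simp [FormalMultilinearSeries.coeff, ofScalars, Pi.one_def, List.ofFn_const]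
  -- Fibonacci identity
  have fibpow : ∀ n : ℕ, τ ^ (n + 1) = (Nat.fib (n + 1) : ℂ) * τ + Nat.fib n ∧
      (1 - τ) ^ (n + 1) = (Nat.fib (n + 1) : ℂ) * (1 - τ) + Nat.fib n := by
    intro n
    induction n with
    | zero => simp
    | succ m ih =>
      obtain ⟨ih1, ih2⟩ := ih
      constructor
      · rw [pow_succ, ih1, Nat.fib_add_two]
        push_cast
        linear_combination (Nat.fib (m+1) : ℂ) * hτ2
      · rw [pow_succ, ih2, Nat.fib_add_two]
        push_cast
        linear_combination (Nat.fib (m+1) : ℂ) * hτ2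
  have key : ∀ m : ℕ, (-1 : ℂ) ^ (m + 1) + τ ^ (2 * (m + 1)) =
      ((Nat.fib (m + 2) + Nat.fib m : ℕ) : ℂ) * τ ^ (m + 1) := by
    intro m
    have hστ : (1 - τ) * τ = -1 := by linear_combination -hτ2
    have h1 : (-1 : ℂ) ^ (m + 1) = (1 - τ) ^ (m + 1) * τ ^ (m + 1) := by
      rw [← mul_pow, hστ]
    obtain ⟨e1, e2⟩ := fibpow m
    rw [h1, show 2 * (m + 1) = (m + 1) * 2 by ring, pow_mul, e2, e1]
    push_cast [Nat.fib_add_two]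
    ring
  refine ⟨?_, ?_, ?_⟩
  · rw [hcoeff]
    simp only [hc, if_neg one_ne_zero]
    norm_num
    linear_combination hτ2
  · rw [hcoeff]
    simp only [hc]
    norm_num
    linear_combination (τ ^ 2 + τ - 1) * hτ2
  · intro n hn
    obtain ⟨k, rfl⟩ := Nat.exists_eq_add_of_le hn
    rw [hcoeff]
    simp only [hc, if_neg (by omega : 3 + k ≠ 0)]
    have := key (k + 2)
    rw [show 3 + k = k + 3 by ring] at *
    simp only [show k + 3 - 3 = k by omega, show k + 3 - 2 = k + 1 by omega,
      show k + 3 - 1 = k + 2 by omega]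
    rw [show k + 2 + 1 = k + 3 by ring] at this
    rw [this]
    congr 1
    have hfib : Nat.fib (k+2+2) + Nat.fib (k+2)
        = Nat.fib k + Nat.fib (k+1) + Nat.fib (k+2) + Nat.fib (k+3) := by
      have A : Nat.fib (k+2+2) = Nat.fib (k+2) + Nat.fib (k+3) := Nat.fib_add_two
      have B : Nat.fib (k+3) = Nat.fib (k+1) + Nat.fib (k+2) := Nat.fib_add_two
      have C : Nat.fib (k+2) = Nat.fib k + Nat.fib (k+1) := Nat.fib_add_two
      omega
    exact_mod_cast congrArg (Nat.cast : ℕ → ℂ) hfib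
end

section
/- Let τ = (1-√5)/2 and p̃(z) = (1+τ²z²)/(1-τz-τ²z²). Then for all z in the open unit disk, Re(p̃(z)) > √5/10. -/
/-- For `‖w‖ < r ≤ 1`, the real part of `1/(1-w)` exceeds `1/(1+r)`. -/
lemma re_one_div_one_sub_gt {r : ℝ} (hr0 : 0 < r) (hr1 : r ≤ 1) (w : ℂ)
    (hw : ‖w‖ < r) : 1 / (1 + r) < ((1 : ℂ) / (1 - w)).re := by
  have hw1 : ‖w‖ < 1 := lt_of_lt_of_le hw hr1
  have hne : (1 : ℂ) - w ≠ 0 := by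
    intro h
    have : w = 1 := by linear_combination -h
    rw [this] at hw1; simp at hw1
  have hN : 0 < Complex.normSq (1 - w) := Complex.normSq_pos.mpr hne
  have hre : ((1 : ℂ) / (1 - w)).re = (1 - w.re) / Complex.normSq (1 - w) := by
    rw [one_div, Complex.inv_re]
    simp [Complex.sub_re]
  rw [hre]
  have hNS : Complex.normSq (1 - w) = (1 - w.re) ^ 2 + w.im ^ 2 := by
    simp [Complex.normSq_apply, Complex.sub_re, Complex.sub_im]; ring
  have habs : w.re ^ 2 + w.im ^ 2 = ‖w‖ ^ 2 := by
    rw [Complex.sq_norm, Complex.normSq_apply]; ring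
  have hre_le : |w.re| ≤ ‖w‖ := Complex.abs_re_le_norm w
  have h1 : -‖w‖ ≤ w.re := (abs_le.mp hre_le).1
  have h2 : w.re ≤ ‖w‖ := (abs_le.mp hre_le).2
  have hwnn : 0 ≤ ‖w‖ := norm_nonneg w
  rw [div_lt_div_iff₀ (by positivity) hN]
  rw [hNS]
  nlinarith [sq_nonneg (‖w‖ - w.re), mul_pos (sub_pos.mpr hw) (by linarith : (0:ℝ) < 1 + ‖w‖)]

theorem ptilde_re_bound (τ : ℂ) (hτ : τ = ((1 - Real.sqrt 5) / 2 : ℝ)) :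
    ∀ z : ℂ, ‖z‖ < 1 →
      Real.sqrt 5 / 10 <
        ((1 + τ ^ 2 * z ^ 2) / (1 - τ * z - τ ^ 2 * z ^ 2)).re := by
  intro z hz
  set s5 := Real.sqrt 5 with hs5def
  have hs5 : s5 ^ 2 = 5 := Real.sq_sqrt (by norm_num)
  have hs5nn : 0 ≤ s5 := Real.sqrt_nonneg 5
  have hs5l : 2 < s5 := by nlinarith
  have hs5u : s5 < 3 := by nlinarith
  -- τ satisfies τ² = τ + 1
  have hτ2 : τ ^ 2 = τ + 1 := by
    have hr : ((1 - s5) / 2 : ℝ) ^ 2 = (1 - s5) / 2 + 1 := by nlinarith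
    rw [hτ]
    norm_cast
  set r : ℝ := (3 - s5) / 2 with hrdef
  have hr0 : 0 < r := by rw [hrdef]; linarith
  have hr1 : r < 1 := by rw [hrdef]; linarith
  have hτ2r : τ ^ 2 = (r : ℂ) := by
    rw [hτ2, hτ, hrdef]; push_cast; ring
  -- nonvanishing of the factors
  have h1 : (1 : ℂ) + z ≠ 0 := by
    intro h
    have : z = -1 := by linear_combination h
    rw [this] at hz; simp at hz
  have hwr : ‖τ ^ 2 * z‖ < r := by
    rw [hτ2r, norm_mul]
    calc ‖(r : ℂ)‖ * ‖z‖ = r * ‖z‖ := by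
          rw [Complex.norm_real, Real.norm_eq_abs, abs_of_pos hr0]
      _ < r * 1 := by
          rcases eq_or_lt_of_le (norm_nonneg z) with h0 | h0
          · rw [← h0]; simpa using hr0
          · exact mul_lt_mul_of_pos_left hz hr0
      _ = r := mul_one r
  have h2 : (1 : ℂ) - τ ^ 2 * z ≠ 0 := by
    intro h
    have : τ ^ 2 * z = 1 := by linear_combination -h
    rw [this] at hwr
    simp at hwr; linarith
  -- partial fraction decomposition
  have hden : 1 - τ * z - τ ^ 2 * z ^ 2 = (1 + z) * (1 - τ ^ 2 * z) := by
    linear_combination z * hτ2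
  have hdecomp : (1 + τ ^ 2 * z ^ 2) / (1 - τ * z - τ ^ 2 * z ^ 2)
      = -1 + 1 / (1 + z) + 1 / (1 - τ ^ 2 * z) := by
    rw [hden, div_eq_iff (mul_ne_zero h1 h2)]
    have e1 : (1 / (1 + z)) * ((1 + z) * (1 - τ ^ 2 * z)) = 1 - τ ^ 2 * z := by
      field_simp
    have e2 : (1 / (1 - τ ^ 2 * z)) * ((1 + z) * (1 - τ ^ 2 * z)) = 1 + z := by
      field_simp
    linear_combination -e1 - e2
  rw [hdecomp]
  have hRe : (-1 + 1 / (1 + z) + 1 / (1 - τ ^ 2 * z)).re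
      = -1 + ((1:ℂ) / (1 + z)).re + ((1:ℂ) / (1 - τ ^ 2 * z)).re := by
    simp [Complex.add_re]
  rw [hRe]
  -- bound each term
  have hb1 : (1 : ℝ) / 2 < ((1:ℂ) / (1 + z)).re := by
    have := re_one_div_one_sub_gt (r := 1) one_pos le_rfl (-z) (by simpa using hz)
    rw [sub_neg_eq_add] at this
    norm_num at this ⊢
    linarith
  have hb2 : 1 / (1 + r) < ((1:ℂ) / (1 - τ ^ 2 * z)).re :=
    re_one_div_one_sub_gt hr0 hr1.le (τ ^ 2 * z) hwr
  have hval : s5 / 10 = -1 + 1 / 2 + 1 / (1 + r) := by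
    have h5 : (0:ℝ) < 5 - s5 := by linarith
    rw [hrdef, show (1:ℝ) + (3 - s5) / 2 = (5 - s5) / 2 by ring]
    rw [one_div_div]
    field_simp
    nlinarith
  rw [hval]
  linarith
end

section
/- Let τ = (1-√5)/2. The function p̃(z) = (1+τ²z²)/(1-τz-τ²z²) is injective on the open disk |z| < (3-√5)/2. -/
theorem ptilde_injOn (τ : ℂ) (hτ : τ = ((1 - Real.sqrt 5) / 2 : ℝ)) :
    Set.InjOn (fun z : ℂ => (1 + τ ^ 2 * z ^ 2) / (1 - τ * z - τ ^ 2 * z ^ 2))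
      {z : ℂ | ‖z‖ < (3 - Real.sqrt 5) / 2} := by
  have hs5 : Real.sqrt 5 ^ 2 = 5 := Real.sq_sqrt (by norm_num)
  have h2 : (2:ℝ) < Real.sqrt 5 := by nlinarith [Real.sqrt_nonneg 5]
  have h3 : Real.sqrt 5 < 3 := by nlinarith [Real.sqrt_nonneg 5]
  have hτn : ‖τ‖ = (Real.sqrt 5 - 1) / 2 := by
    rw [hτ, Complex.norm_real, Real.norm_eq_abs, abs_of_nonpos (by nlinarith)]
    ring
  -- key bound : for z in the disk, ‖τ‖ * ‖z‖ < √5 - 2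
  have hbd : ∀ z : ℂ, ‖z‖ < (3 - Real.sqrt 5) / 2 → ‖τ‖ * ‖z‖ < Real.sqrt 5 - 2 := by
    intro z hz
    have hzn : (0:ℝ) ≤ ‖z‖ := norm_nonneg z
    rw [hτn]
    nlinarith
  have hden : ∀ z : ℂ, ‖z‖ < (3 - Real.sqrt 5) / 2 → 1 - τ * z - τ ^ 2 * z ^ 2 ≠ 0 := by
    intro z hz h
    have h1 : (1:ℂ) = τ * z + τ ^ 2 * z ^ 2 := by linear_combination h
    have hn := congrArg norm h1
    rw [norm_one] at hn
    have hb : ‖τ * z + τ ^ 2 * z ^ 2‖ ≤ ‖τ‖ * ‖z‖ + (‖τ‖ * ‖z‖) ^ 2 := by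
      calc ‖τ * z + τ ^ 2 * z ^ 2‖ ≤ ‖τ * z‖ + ‖τ ^ 2 * z ^ 2‖ := norm_add_le _ _
        _ = ‖τ‖ * ‖z‖ + (‖τ‖ * ‖z‖) ^ 2 := by
            rw [norm_mul, norm_mul, norm_pow, norm_pow]; ring
    have hu := hbd z hz
    have hun : (0:ℝ) ≤ ‖τ‖ * ‖z‖ := mul_nonneg (norm_nonneg τ) (norm_nonneg z)
    nlinarith
  intro z hz w hw heq
  simp only [Set.mem_setOf_eq] at hz hw
  have hdz := hden z hz
  have hdw := hden w hw
  simp only at heq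
  rw [div_eq_div_iff hdz hdw] at heq
  have key : (z - w) * (τ * (1 + 2 * τ * (z + w) - τ ^ 2 * (z * w))) = 0 := by
    linear_combination heq
  rcases mul_eq_zero.1 key with h | h
  · exact sub_eq_zero.1 h
  · exfalso
    rcases mul_eq_zero.1 h with h | h
    · rw [h, norm_zero] at hτn; nlinarith
    · have h1 : (1:ℂ) = -(2 * τ * (z + w) - τ ^ 2 * (z * w)) := by linear_combination h
      have hn := congrArg norm h1
      rw [norm_one, norm_neg] at hn
      have hb : ‖2 * τ * (z + w) - τ ^ 2 * (z * w)‖ ≤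
          2 * (‖τ‖ * ‖z‖ + ‖τ‖ * ‖w‖) + (‖τ‖ * ‖z‖) * (‖τ‖ * ‖w‖) := by
        calc ‖2 * τ * (z + w) - τ ^ 2 * (z * w)‖
            ≤ ‖2 * τ * (z + w)‖ + ‖τ ^ 2 * (z * w)‖ := norm_sub_le _ _
          _ = 2 * ‖τ‖ * ‖z + w‖ + (‖τ‖ * ‖τ‖) * (‖z‖ * ‖w‖) := by
              have h2c : ‖(2:ℂ)‖ = 2 := by norm_num
              rw [norm_mul, norm_mul, norm_mul, norm_pow, norm_mul, h2c, sq]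
          _ ≤ 2 * (‖τ‖ * ‖z‖ + ‖τ‖ * ‖w‖) + (‖τ‖ * ‖z‖) * (‖τ‖ * ‖w‖) := by
              have := norm_add_le z w
              have hτ0 : (0:ℝ) ≤ ‖τ‖ := norm_nonneg τ
              nlinarith
      have huz := hbd z hz
      have huw := hbd w hw
      have hunz : (0:ℝ) ≤ ‖τ‖ * ‖z‖ := mul_nonneg (norm_nonneg τ) (norm_nonneg z)
      have hunw : (0:ℝ) ≤ ‖τ‖ * ‖w‖ := mul_nonneg (norm_nonneg τ) (norm_nonneg w)
      nlinarith
end
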